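/- Let Ω ⊆ Q be a closed axis-parallel cube with positive volume. Then for all sufficiently large n, for every minimizer Y_n of the quantization energy among subsets of Q with n points, the total energy contribution of the Voronoi cells that do not intersect ∂Ω satisfies Σ_{y ∈ Y_n, V_y ∩ ∂Ω = ∅} ∫_{V_y} |x − y|² dx ≥ (π/5)·ω₃^{−5/3}·n^{−2/3} − (3Γ₄⁶/(4Γ₅³))·n^{−1}, where Γ₄ := (2·12^{1/4}·16^{1/3}/(π^{1/4}·ω₃^{1/12}))·(√(1 + 2⁴·3³/(5²·10³)) − 1)^{−1/2}·(5²·10³/(2²·3³))^{1/4}, Γ₅ := (1/4)·(√(1 + 2⁴·3³/(5²·10³)) − 1)·Γ₃, Γ₃ := ω₃^{−1/5}·Γ₁^{1/5}, Γ₁ := (2/5)^{2/3}/40. -/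

import Mathlib

open MeasureTheory

noncomputable section

/-- Euclidean 3-space. -/
abbrev E3 := EuclideanSpace ℝ (Fin 3)

/-- The closed unit cube Q = [0,1]³. -/
def Qcube : Set E3 := {x | ∀ i, x i ∈ Set.Icc (0 : ℝ) 1}

/-- The quantization energy E(Y) = ∫_Q dist(x,Y)² dx. -/
def quantE (Y : Finset E3) : ℝ := ∫ x in Qcube, (Metric.infDist x (↑Y : Set E3)) ^ 2

/-- The Voronoi cell of a generator y ∈ Y, relative to Q. -/
def vorCell (Y : Finset E3) (y : E3) : Set E3 :=
  {x ∈ Qcube | ∀ z ∈ Y, dist x y ≤ dist x z}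

/-- Y is a minimizer of the quantization energy among n-point subsets of Q. -/
def IsMinimizer (n : ℕ) (Y : Finset E3) : Prop :=
  (↑Y : Set E3) ⊆ Qcube ∧ Y.card = n ∧
    ∀ Z : Finset E3, (↑Z : Set E3) ⊆ Qcube → Z.card = n → quantE Y ≤ quantE Z

/-- ω₃ = 4π/3, the volume of the unit ball in ℝ³. -/
def omega3 : ℝ := 4 * Real.pi / 3

/-- Γ₁ = (2/5)^{2/3} / 40. -/
def Gamma1 : ℝ := ((2 / 5 : ℝ) ^ ((2 : ℝ) / 3)) / 40

/-- Γ₃ = ω₃^{-1/5} Γ₁^{1/5}. -/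
def Gamma3 : ℝ := omega3 ^ (-(1 : ℝ) / 5) * Gamma1 ^ ((1 : ℝ) / 5)

/-- Γ₅ = (1/4)(√(1 + 2⁴·3³/(5²·10³)) − 1) Γ₃. -/
def Gamma5 : ℝ :=
  (1 / 4) * (Real.sqrt (1 + (2 ^ 4 * 3 ^ 3 : ℝ) / (5 ^ 2 * 10 ^ 3)) - 1) * Gamma3

/-- Γ₄, the diameter upper-bound constant. -/
def Gamma4 : ℝ :=
  (2 * (12 : ℝ) ^ ((1 : ℝ) / 4) * (16 : ℝ) ^ ((1 : ℝ) / 3) /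
      (Real.pi ^ ((1 : ℝ) / 4) * omega3 ^ ((1 : ℝ) / 12))) *
    (Real.sqrt (1 + (2 ^ 4 * 3 ^ 3 : ℝ) / (5 ^ 2 * 10 ^ 3)) - 1) ^ (-(1 : ℝ) / 2) *
    ((5 ^ 2 * 10 ^ 3 : ℝ) / (2 ^ 2 * 3 ^ 3)) ^ ((1 : ℝ) / 4)

/-!
Comparing a minimizer with a grid of `(10⁸)³` points bounds its energy by `10⁻¹⁶`, which forces
every point of `Q` to lie within `1/240` of `Y`: a larger hole contains a small cube on which
`dist(·, Y)` is bounded below. Hence the Voronoi cells meeting `∂Ω` lie in six slabs of width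
`1/60` around the faces of `Ω`, and the remaining cells have total volume at least `9/10`.
Outside the ball `B(y, r)` the integrand is at least `r²`, so `∫_V |x - y|² ≥ r² (|V| - ω₃ r³)`;
summing over at most `n` cells with `r = (ω₃ n)^{-1/3} / 2` gives `(31/160) (ω₃ n)^{-2/3}`,
which exceeds `(π/5) ω₃^{-5/3} n^{-2/3} = (3/20) (ω₃ n)^{-2/3}`. The `Γ`-term is nonnegative.
-/

open Metric Set

section CoordBox

variable {ι : Type*}

def coordBox (a b : ι → ℝ) : Set (EuclideanSpace ℝ ι) := {x | ∀ i, x i ∈ Icc (a i) (b i)}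

lemma coordBox_eq_preimage (a b : ι → ℝ) :
    coordBox a b = WithLp.ofLp ⁻¹' univ.pi fun i => Icc (a i) (b i) := by
  ext x
  simp only [coordBox, mem_ofPred_eq, mem_preimage, mem_pi, mem_univ, true_imp_iff]

lemma isCompact_coordBox (a b : ι → ℝ) : IsCompact (coordBox a b) := by
  rw [coordBox_eq_preimage]
  exact (PiLp.homeomorph 2 _).isCompact_preimage.mpr (isCompact_univ_pi fun _ => isCompact_Icc)

variable [Fintype ι]

lemma volume_coordBox (a b : ι → ℝ) :
    volume (coordBox a b) = ∏ i, ENNReal.ofReal (b i - a i) := by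
  rw [coordBox_eq_preimage, (PiLp.volume_preserving_ofLp ι).measure_preimage
    (MeasurableSet.univ_pi fun _ => measurableSet_Icc).nullMeasurableSet, volume_pi_pi]
  simp [Real.volume_Icc]

lemma frontier_coordBox_subset (a b : ι → ℝ) :
    frontier (coordBox a b) ⊆ {x | ∃ i, x i = a i ∨ x i = b i} := by
  intro x hx
  show ∃ i, x i = a i ∨ x i = b i
  by_contra! hne
  have hx_mem : x ∈ coordBox a b := (isCompact_coordBox a b).isClosed.frontier_subset hx
  have hopen : IsOpen (WithLp.ofLp ⁻¹' univ.pi fun i => Ioo (a i) (b i) :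
      Set (EuclideanSpace ℝ ι)) :=
    (isOpen_set_pi finite_univ fun _ _ => isOpen_Ioo).preimage (PiLp.continuous_ofLp 2 _)
  refine hx.2 (interior_maximal ?_ hopen ?_)
  · rw [coordBox_eq_preimage]
    exact preimage_mono (pi_mono fun _ _ => Ioo_subset_Icc_self)
  · intro i _
    exact ⟨(hx_mem i).1.lt_of_ne (hne i).1.symm, (hx_mem i).2.lt_of_ne (hne i).2⟩

lemma volume_coordBox_slab_le (i : ι) (c δ : ℝ) :
    volume {x ∈ coordBox 0 1 | |x i - c| ≤ δ} ≤ ENNReal.ofReal (2 * δ) := by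
  classical
  set lo := Function.update (0 : ι → ℝ) i (c - δ)
  set hi := Function.update (1 : ι → ℝ) i (c + δ)
  have hsub : {x ∈ coordBox 0 1 | |x i - c| ≤ δ} ⊆ coordBox lo hi := by
    rintro x ⟨hx, hxc⟩ j
    rcases eq_or_ne j i with rfl | hj
    · simp only [lo, hi, Function.update_self]
      exact ⟨by linarith [neg_abs_le (x j - c)], by linarith [le_abs_self (x j - c)]⟩
    · simpa [lo, hi, hj] using hx j
  have hfactor : ∀ j, ENNReal.ofReal (hi j - lo j) =
      Function.update (1 : ι → ENNReal) i (ENNReal.ofReal (2 * δ)) j := by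
    intro j
    rcases eq_or_ne j i with rfl | hj
    · simp only [lo, hi, Function.update_self]
      ring_nf
    · simp [lo, hi, hj]
  calc _ ≤ _ := measure_mono hsub
    _ = ENNReal.ofReal (2 * δ) := by
      simp only [volume_coordBox, hfactor, Finset.prod_update_of_mem (Finset.mem_univ i)]
      simp

lemma volume_near_frontier_coordBox_le (a b : ι → ℝ) {δ : ℝ} (hδ : 0 ≤ δ) :
    volume {x ∈ coordBox 0 1 | ∃ i, |x i - a i| ≤ δ ∨ |x i - b i| ≤ δ} ≤
      ENNReal.ofReal (4 * Fintype.card ι * δ) := by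
  calc _ ≤ volume (⋃ i, ({x ∈ coordBox 0 1 | |x i - a i| ≤ δ} ∪
          {x ∈ coordBox 0 1 | |x i - b i| ≤ δ})) := by
        refine measure_mono ?_
        rintro x ⟨hx, i, hi | hi⟩
        exacts [mem_iUnion.mpr ⟨i, Or.inl ⟨hx, hi⟩⟩, mem_iUnion.mpr ⟨i, Or.inr ⟨hx, hi⟩⟩]
    _ ≤ ∑ i : ι, (ENNReal.ofReal (2 * δ) + ENNReal.ofReal (2 * δ)) :=
        (measure_iUnion_fintype_le _ _).trans <| Finset.sum_le_sum fun i _ =>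
          (measure_union_le _ _).trans <|
            add_le_add (volume_coordBox_slab_le i _ δ) (volume_coordBox_slab_le i _ δ)
    _ = ENNReal.ofReal (4 * Fintype.card ι * δ) := by
        rw [Finset.sum_const, Finset.card_univ, nsmul_eq_mul, ← ENNReal.ofReal_add (by positivity)
          (by positivity), ← ENNReal.ofReal_natCast, ← ENNReal.ofReal_mul (by positivity)]
        ring_nf

end CoordBox

lemma sq_mul_sub_measureReal_ball_le_setIntegral {X : Type*} [PseudoMetricSpace X]
    [ProperSpace X] [MeasurableSpace X] [OpensMeasurableSpace X] {μ : Measure X}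
    [IsFiniteMeasureOnCompacts μ] {s : Set X} (hs : MeasurableSet s) (hμs : μ s ≠ ⊤) (y : X)
    {r : ℝ} (hr : 0 ≤ r) (hint : IntegrableOn (fun x => dist x y ^ 2) s μ) :
    r ^ 2 * (μ.real s - μ.real (ball y r)) ≤ ∫ x in s, dist x y ^ 2 ∂μ := by
  have hμs' : μ (s \ ball y r) ≠ ⊤ := measure_ne_top_of_subset sdiff_subset hμs
  calc r ^ 2 * (μ.real s - μ.real (ball y r))
      ≤ r ^ 2 * μ.real (s \ ball y r) :=
        mul_le_mul_of_nonneg_left (le_measureReal_sdiff measure_ball_lt_top.ne) (sq_nonneg r)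
    _ ≤ ∫ x in s \ ball y r, dist x y ^ 2 ∂μ := by
        refine setIntegral_ge_of_const_le_real (hs.diff measurableSet_ball) hμs' ?_
          (hint.mono_set sdiff_subset)
        intro x hx
        exact pow_le_pow_left₀ hr (not_lt.mp fun h => hx.2 (mem_ball.mpr h)) 2
    _ ≤ ∫ x in s, dist x y ^ 2 ∂μ :=
        setIntegral_mono_set hint (Filter.Eventually.of_forall fun _ => sq_nonneg _)
          sdiff_subset.eventuallyLE

lemma Qcube_eq_coordBox : Qcube = coordBox 0 1 := rfl

lemma isCompact_Qcube : IsCompact Qcube := isCompact_coordBox 0 1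

lemma volume_Qcube : volume Qcube = 1 := by
  simp [Qcube_eq_coordBox, volume_coordBox]

lemma isClosed_vorCell (Y : Finset E3) (y : E3) : IsClosed (vorCell Y y) := by
  have : vorCell Y y = Qcube ∩ ⋂ z ∈ Y, {x | dist x y ≤ dist x z} := by
    ext x
    simp [vorCell]
  rw [this]
  exact isCompact_Qcube.isClosed.inter <| isClosed_biInter fun z _ =>
    isClosed_le (continuous_id.dist continuous_const) (continuous_id.dist continuous_const)

lemma vorCell_subset_Qcube (Y : Finset E3) (y : E3) : vorCell Y y ⊆ Qcube := fun _ hx => hx.1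

lemma volume_vorCell_ne_top (Y : Finset E3) (y : E3) : volume (vorCell Y y) ≠ ⊤ :=
  measure_ne_top_of_subset (vorCell_subset_Qcube Y y) (by simp [volume_Qcube])

lemma exists_mem_vorCell {Y : Finset E3} (hY : Y.Nonempty) {x : E3} (hx : x ∈ Qcube) :
    ∃ y ∈ Y, x ∈ vorCell Y y := by
  obtain ⟨y, hy, hmin⟩ := Y.exists_min_image (dist x) hY
  exact ⟨y, hy, hx, hmin⟩

lemma dist_le_infDist_of_mem_vorCell {Y : Finset E3} {y x : E3} (hy : y ∈ Y)
    (hx : x ∈ vorCell Y y) : dist x y ≤ infDist x (Y : Set E3) :=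
  (le_infDist ⟨y, hy⟩).mpr hx.2

lemma dist_le_two_mul_of_abs_sub_le {x y : E3} {s : ℝ} (h : ∀ i, |x i - y i| ≤ s) :
    dist x y ≤ 2 * s := by
  have hs : 0 ≤ s := (abs_nonneg _).trans (h 0)
  have hcoord : ∀ i, dist (x i) (y i) ^ 2 ≤ s ^ 2 := fun i =>
    pow_le_pow_left₀ dist_nonneg ((Real.dist_eq _ _).trans_le (h i)) 2
  rw [EuclideanSpace.dist_eq, Real.sqrt_le_iff, Fin.sum_univ_three]
  exact ⟨by positivity, by nlinarith [hcoord 0, hcoord 1, hcoord 2]⟩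

lemma exists_nat_lt_abs_sub_le {m : ℕ} (hm : 0 < m) {t : ℝ} (ht : t ∈ Icc (0 : ℝ) 1) :
    ∃ k < m, |t - (k + 1 / 2) / m| ≤ 1 / (2 * m) := by
  have hm' : (0 : ℝ) < m := Nat.cast_pos.mpr hm
  have htm : 0 ≤ t * m := mul_nonneg ht.1 hm'.le
  obtain ⟨k, hkm, hk_le, hk_ge⟩ : ∃ k < m, (k : ℝ) ≤ t * m ∧ t * m ≤ k + 1 := by
    rcases le_or_gt ⌊t * m⌋₊ (m - 1) with h | h
    · exact ⟨⌊t * m⌋₊, by omega, Nat.floor_le htm, (Nat.lt_floor_add_one _).le⟩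
    · refine ⟨m - 1, by omega, (Nat.cast_le.mpr h.le).trans (Nat.floor_le htm), ?_⟩
      rw [Nat.cast_pred hm]
      nlinarith [ht.2]
  refine ⟨k, hkm, ?_⟩
  have hcenter : |t * m - (k + 1 / 2)| ≤ 1 / 2 := abs_le.mpr ⟨by linarith, by linarith⟩
  calc |t - (k + 1 / 2) / m| = |t * m - (k + 1 / 2)| / m := by
        rw [← abs_of_pos hm', ← abs_div, abs_of_pos hm']
        congr 1
        field_simp
    _ ≤ 1 / 2 / m := by gcongr
    _ = 1 / (2 * m) := by ring

def gridPoints (m : ℕ) : Finset E3 :=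
  Finset.univ.image fun f : Fin 3 → Fin m => WithLp.toLp 2 fun i => ((f i : ℝ) + 1 / 2) / m

lemma card_gridPoints_le (m : ℕ) : (gridPoints m).card ≤ m ^ 3 :=
  Finset.card_image_le.trans (by simp)

lemma gridPoints_subset_Qcube (m : ℕ) : (gridPoints m : Set E3) ⊆ Qcube := by
  intro p hp i
  obtain ⟨f, -, rfl⟩ := Finset.mem_image.mp hp
  have hfi : (f i : ℝ) + 1 ≤ m := by exact_mod_cast (f i).2
  have hm : (0 : ℝ) < m := Nat.cast_pos.mpr (f i).pos
  constructor
  · positivity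
  · rw [div_le_one hm]
    linarith

lemma exists_mem_gridPoints_dist_le {m : ℕ} (hm : 0 < m) {x : E3} (hx : x ∈ Qcube) :
    ∃ p ∈ gridPoints m, dist x p ≤ 1 / m := by
  choose k hk hkx using fun i => exists_nat_lt_abs_sub_le hm (hx i)
  refine ⟨_, Finset.mem_image_of_mem _ (Finset.mem_univ fun i => ⟨k i, hk i⟩), ?_⟩
  calc dist x _ ≤ 2 * (1 / (2 * m)) := dist_le_two_mul_of_abs_sub_le hkx
    _ = 1 / m := by field_simp

lemma exists_finset_card_eq_infDist_le {m n : ℕ} (hm : 0 < m) (hn : m ^ 3 ≤ n) :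
    ∃ Z : Finset E3, (Z : Set E3) ⊆ Qcube ∧ Z.card = n ∧
      ∀ x ∈ Qcube, infDist x (Z : Set E3) ≤ 1 / m := by
  classical
  have hQ : Qcube.Infinite := fun h => by simpa [volume_Qcube] using h.measure_zero volume
  obtain ⟨P, hPQ, hPcard⟩ := hQ.exists_subset_card_eq n
  obtain ⟨Z, hGZ, hZ, hZcard⟩ := Finset.exists_subsuperset_card_eq
    Finset.subset_union_left ((card_gridPoints_le m).trans hn)
    (hPcard ▸ Finset.card_le_card (Finset.subset_union_right (s₁ := gridPoints m)))
  refine ⟨Z, fun z hz => ?_, hZcard, fun x hx => ?_⟩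
  · rcases Finset.mem_union.mp (hZ hz) with hz | hz
    exacts [gridPoints_subset_Qcube m hz, hPQ hz]
  · obtain ⟨p, hp, hxp⟩ := exists_mem_gridPoints_dist_le hm hx
    exact (infDist_le_dist_of_mem (Finset.mem_coe.mpr (hGZ hp))).trans hxp

lemma integrableOn_infDist_sq (Y : Finset E3) :
    IntegrableOn (fun x => infDist x (Y : Set E3) ^ 2) Qcube :=
  ((continuous_infDist_pt _).pow 2).continuousOn.integrableOn_compact isCompact_Qcube

lemma quantE_le_sq {Z : Finset E3} {ε : ℝ} (h : ∀ x ∈ Qcube, infDist x (Z : Set E3) ≤ ε) :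
    quantE Z ≤ ε ^ 2 := by
  calc quantE Z ≤ ∫ _ in Qcube, ε ^ 2 :=
        setIntegral_mono_on (integrableOn_infDist_sq Z)
          (integrableOn_const (by simp [volume_Qcube])) isCompact_Qcube.measurableSet
          fun x hx => pow_le_pow_left₀ infDist_nonneg (h x hx) 2
    _ = ε ^ 2 := by simp [measureReal_def, volume_Qcube]

lemma IsMinimizer.quantE_le {n m : ℕ} {Y : Finset E3} (hY : IsMinimizer n Y) (hm : 0 < m)
    (hn : m ^ 3 ≤ n) : quantE Y ≤ (1 / m) ^ 2 := by
  obtain ⟨Z, hZQ, hZcard, hZ⟩ := exists_finset_card_eq_infDist_le hm hn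
  exact (hY.2.2 Z hZQ hZcard).trans (quantE_le_sq hZ)

lemma le_quantE_of_lt_infDist {Y : Finset E3} {x : E3} (hx : x ∈ Qcube) {s : ℝ} (hs0 : 0 ≤ s)
    (hs1 : s ≤ 1) (h : 4 * s < infDist x (Y : Set E3)) : (2 * s) ^ 2 * s ^ 3 ≤ quantE Y := by
  set c : Fin 3 → ℝ := fun i => min (x i) (1 - s)
  set D := coordBox c fun i => c i + s
  have hDQ : D ⊆ Qcube := fun w hw i =>
    ⟨(le_min (hx i).1 (by linarith)).trans (hw i).1,
      (hw i).2.trans (by linarith [min_le_right (x i) (1 - s)])⟩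
  have hfar : ∀ w ∈ D, 2 * s ≤ infDist w (Y : Set E3) := by
    intro w hw
    have hcoord : ∀ i, |x i - w i| ≤ s := fun i => by
      have hcx : c i ≤ x i := min_le_left _ _
      have hxc : x i ≤ c i + s := by
        rcases min_choice (x i) (1 - s) with hc | hc <;> simp only [c, hc] <;> linarith [(hx i).2]
      exact abs_le.mpr ⟨by linarith [(hw i).2], by linarith [(hw i).1]⟩
    linarith [infDist_le_infDist_add_dist (x := x) (y := w) (s := (Y : Set E3)),
      dist_le_two_mul_of_abs_sub_le hcoord]
  have hvolD : volume.real D = s ^ 3 := by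
    simp [measureReal_def, D, volume_coordBox, ENNReal.toReal_ofReal hs0]
  calc (2 * s) ^ 2 * s ^ 3 = (2 * s) ^ 2 * volume.real D := by rw [hvolD]
    _ ≤ ∫ w in D, infDist w (Y : Set E3) ^ 2 :=
        setIntegral_ge_of_const_le_real (isCompact_coordBox _ _).measurableSet
          (measure_ne_top_of_subset hDQ (by simp [volume_Qcube]))
          (fun w hw => pow_le_pow_left₀ (by positivity) (hfar w hw) 2)
          ((integrableOn_infDist_sq Y).mono_set hDQ)
    _ ≤ quantE Y :=
        setIntegral_mono_set (integrableOn_infDist_sq Y)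
          (Filter.Eventually.of_forall fun _ => sq_nonneg _) hDQ.eventuallyLE

lemma IsMinimizer.infDist_le {n : ℕ} {Y : Finset E3} (hY : IsMinimizer n Y) (hn : 10 ^ 24 ≤ n)
    {x : E3} (hx : x ∈ Qcube) : infDist x (Y : Set E3) ≤ 1 / 240 := by
  -- A hole of radius 1/240 forces energy (1/480)² (1/960)³ > 10⁻¹⁶, while the grid competitor
  -- with 10⁸ points per side has energy at most 10⁻¹⁶.
  by_contra! h
  have hlow := le_quantE_of_lt_infDist (Y := Y) (s := 1 / 960) hx (by norm_num) (by norm_num)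
    (by linarith)
  have hup := hY.quantE_le (m := 10 ^ 8) (by norm_num)
    ((show (10 ^ 8) ^ 3 = 10 ^ 24 by norm_num).le.trans hn)
  norm_num at hlow hup
  linarith

lemma sum_measureReal_vorCell_ge {Y : Finset E3} (hY : Y.Nonempty) {ρ : ℝ} (hρ : 0 ≤ ρ)
    (hcov : ∀ x ∈ Qcube, infDist x (Y : Set E3) ≤ ρ) (a b : Fin 3 → ℝ) {F : Finset E3}
    (hF : ∀ y ∈ Y, ¬(vorCell Y y ∩ frontier (coordBox a b)).Nonempty → y ∈ F) :
    1 - 24 * ρ ≤ ∑ y ∈ F, volume.real (vorCell Y y) := by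
  set N := {x ∈ coordBox 0 1 | ∃ i, |x i - a i| ≤ 2 * ρ ∨ |x i - b i| ≤ 2 * ρ}
  have htouch : ∀ y ∈ Y, (vorCell Y y ∩ frontier (coordBox a b)).Nonempty → vorCell Y y ⊆ N := by
    rintro y hy ⟨p, hpV, hpB⟩ x hxV
    obtain ⟨i, hi⟩ := frontier_coordBox_subset a b hpB
    have hxp : |x i - p i| ≤ 2 * ρ := by
      rw [← Real.dist_eq]
      linarith [PiLp.dist_apply_le x p i, dist_triangle_right x p y,
        (dist_le_infDist_of_mem_vorCell hy hxV).trans (hcov x hxV.1),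
        (dist_le_infDist_of_mem_vorCell hy hpV).trans (hcov p hpV.1)]
    exact ⟨hxV.1, i, by rcases hi with h | h <;> simp only [← h, hxp, true_or, or_true]⟩
  have hcover : Qcube \ N ⊆ ⋃ y ∈ F, vorCell Y y := by
    rintro x ⟨hxQ, hxN⟩
    obtain ⟨y, hy, hxy⟩ := exists_mem_vorCell hY hxQ
    exact mem_biUnion (hF y hy fun h => hxN (htouch y hy h hxy)) hxy
  have hN : volume.real N ≤ 24 * ρ := by
    refine ENNReal.toReal_le_of_le_ofReal (by positivity) ?_
    convert volume_near_frontier_coordBox_le a b (by positivity : 0 ≤ 2 * ρ) using 2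
    norm_num
    ring
  have hQ : volume Qcube ≠ ⊤ := by simp [volume_Qcube]
  calc 1 - 24 * ρ ≤ volume.real Qcube - volume.real N := by
        rw [measureReal_def, volume_Qcube, ENNReal.toReal_one]
        linarith
    _ ≤ volume.real (Qcube \ N) :=
        le_measureReal_sdiff (measure_ne_top_of_subset (sep_subset _ _) hQ)
    _ ≤ volume.real (⋃ y ∈ F, vorCell Y y) :=
        measureReal_mono hcover <| measure_ne_top_of_subset
          (iUnion₂_subset fun y _ => vorCell_subset_Qcube Y y) hQ
    _ ≤ ∑ y ∈ F, volume.real (vorCell Y y) := measureReal_biUnion_finset_le _ _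

lemma le_sum_setIntegral_vorCell (Y F : Finset E3) {r : ℝ} (hr : 0 ≤ r) :
    r ^ 2 * (∑ y ∈ F, volume.real (vorCell Y y) - F.card * (r ^ 3 * (Real.pi * 4 / 3))) ≤
      ∑ y ∈ F, ∫ x in vorCell Y y, dist x y ^ 2 := by
  have hball : ∀ y : E3, volume.real (ball y r) = r ^ 3 * (Real.pi * 4 / 3) := fun y => by
    simp [measureReal_def, ENNReal.toReal_ofReal hr, ENNReal.toReal_ofReal (by positivity :
      0 ≤ Real.pi * 4 / 3)]
  calc _ = ∑ y ∈ F, r ^ 2 * (volume.real (vorCell Y y) - volume.real (ball y r)) := by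
        simp only [hball, ← Finset.mul_sum, Finset.sum_sub_distrib, Finset.sum_const,
          nsmul_eq_mul]
        ring
    _ ≤ _ := Finset.sum_le_sum fun y _ =>
        sq_mul_sub_measureReal_ball_le_setIntegral (isClosed_vorCell Y y).measurableSet
          (volume_vorCell_ne_top Y y) y hr <|
          ((continuous_id.dist continuous_const).pow 2).continuousOn.integrableOn_compact <|
            isCompact_Qcube.of_isClosed_subset (isClosed_vorCell Y y) (vorCell_subset_Qcube Y y)

lemma omega3_pos : 0 < omega3 := by
  unfold omega3
  positivity

lemma Gamma5_pos : 0 < Gamma5 := by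
  have hsqrt : 1 < Real.sqrt (1 + (2 ^ 4 * 3 ^ 3 : ℝ) / (5 ^ 2 * 10 ^ 3)) :=
    (Real.lt_sqrt zero_le_one).mpr (by norm_num)
  have hΓ3 : 0 < Gamma3 := by
    unfold Gamma3 Gamma1
    have := omega3_pos
    positivity
  unfold Gamma5
  nlinarith

-- With this `r`, `n` balls of radius `r` have total volume `1 / 8`.
lemma pi_div_five_mul_rpow_le {n k : ℕ} (hn : 0 < n) (hk : k ≤ n) {S : ℝ} (hS : 9 / 10 ≤ S) :
    Real.pi / 5 * omega3 ^ (-(5 : ℝ) / 3) * (n : ℝ) ^ (-(2 : ℝ) / 3) ≤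
      ((omega3 * n) ^ (-(1 : ℝ) / 3) / 2) ^ 2 *
        (S - k * (((omega3 * n) ^ (-(1 : ℝ) / 3) / 2) ^ 3 * (Real.pi * 4 / 3))) := by
  have hω := omega3_pos
  have hn' : (0 : ℝ) < n := Nat.cast_pos.mpr hn
  set u := (omega3 * n) ^ (-(1 : ℝ) / 3)
  have hu : 0 < u := by positivity
  have hu_pow : ∀ j : ℕ, u ^ j = (omega3 * n) ^ (-(j : ℝ) / 3) := fun j => by
    rw [← Real.rpow_natCast, ← Real.rpow_mul (by positivity)]
    ring_nf
  have hu3 : u ^ 3 * (omega3 * n) = 1 := by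
    rw [hu_pow, show -((3 : ℕ) : ℝ) / 3 = -1 by norm_num, Real.rpow_neg_one,
      inv_mul_cancel₀ (by positivity)]
  have hlhs :
      Real.pi / 5 * omega3 ^ (-(5 : ℝ) / 3) * (n : ℝ) ^ (-(2 : ℝ) / 3) = 3 / 20 * u ^ 2 := by
    rw [hu_pow, Real.mul_rpow hω.le hn'.le, show -(5 : ℝ) / 3 = -((2 : ℕ) : ℝ) / 3 + -1 by norm_num,
      Real.rpow_add hω, Real.rpow_neg_one]
    unfold omega3
    field_simp
    push_cast
    ring
  have hk' : k * u ^ 3 * omega3 ≤ 1 := by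
    rw [← hu3]
    have : (k : ℝ) ≤ n := Nat.cast_le.mpr hk
    nlinarith [pow_pos hu 3]
  rw [hlhs, show Real.pi * 4 / 3 = omega3 by unfold omega3; ring]
  nlinarith [sq_nonneg u]

open scoped Classical in
theorem stmt_14_general (Ω : Set E3) (a : E3) (L : ℝ)
    (hΩ : Ω = {x : E3 | ∀ i, x i ∈ Set.Icc (a i) (a i + L)}) :
    ∀ᶠ n : ℕ in Filter.atTop, ∀ Y : Finset E3, IsMinimizer n Y →
      (∑ y ∈ Y.filter (fun y => ¬(vorCell Y y ∩ frontier Ω).Nonempty),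
          ∫ x in vorCell Y y, dist x y ^ 2) ≥
        (Real.pi / 5) * omega3 ^ (-(5 : ℝ) / 3) * (n : ℝ) ^ (-(2 : ℝ) / 3) -
          (3 * Gamma4 ^ 6 / (4 * Gamma5 ^ 3)) * (n : ℝ)⁻¹ := by
  subst hΩ
  filter_upwards [Filter.eventually_ge_atTop (10 ^ 24)] with n hn Y hY
  set F := Y.filter fun y => ¬(vorCell Y y ∩ frontier (coordBox a fun i => a i + L)).Nonempty
  have hn0 : 0 < n := lt_of_lt_of_le (by norm_num) hn
  have hY0 : Y.Nonempty := Finset.card_pos.mp (hY.2.1 ▸ hn0)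
  have hFn : F.card ≤ n := hY.2.1 ▸ Finset.card_filter_le _ _
  have hvol : 9 / 10 ≤ ∑ y ∈ F, volume.real (vorCell Y y) := by
    have := sum_measureReal_vorCell_ge hY0 (by norm_num) (fun x hx => hY.infDist_le hn hx) a
      (fun i => a i + L) (F := F) fun y hy h => Finset.mem_filter.mpr ⟨hy, h⟩
    linarith
  have hΓ : 0 ≤ 3 * Gamma4 ^ 6 / (4 * Gamma5 ^ 3) * (n : ℝ)⁻¹ := by
    have := Gamma5_pos
    positivity
  calc _ ≤ Real.pi / 5 * omega3 ^ (-(5 : ℝ) / 3) * (n : ℝ) ^ (-(2 : ℝ) / 3) := sub_le_self _ hΓ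
    _ ≤ _ := pi_div_five_mul_rpow_le hn0 hFn hvol
    _ ≤ _ := le_sum_setIntegral_vorCell Y F (by have := omega3_pos; positivity)

open scoped Classical in
theorem stmt_14 (Ω : Set E3) (a : E3) (L : ℝ) (hL : 0 < L)
    (hΩ : Ω = {x : E3 | ∀ i, x i ∈ Set.Icc (a i) (a i + L)}) (hΩQ : Ω ⊆ Qcube) :
    ∀ᶠ n : ℕ in Filter.atTop, ∀ Y : Finset E3, IsMinimizer n Y →
      (∑ y ∈ Y.filter (fun y => ¬(vorCell Y y ∩ frontier Ω).Nonempty),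
          ∫ x in vorCell Y y, dist x y ^ 2) ≥
        (Real.pi / 5) * omega3 ^ (-(5 : ℝ) / 3) * (n : ℝ) ^ (-(2 : ℝ) / 3) -
          (3 * Gamma4 ^ 6 / (4 * Gamma5 ^ 3)) * (n : ℝ)⁻¹ :=
  stmt_14_general Ω a L hΩ
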